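/- Let ℓ be a positive integer. For every polynomial P on ℝⁿ of degree strictly less than 2ℓ, every t > 0 and every x ∈ ℝⁿ, B_{ℓ,t} P(x) = P(x). -/

import Mathlib

/-!
Rescaling `B(x, jt)` onto the unit ball in two ways, `y = x + jtz` and `y = x - jtz`, writes
`B_{ℓ,t}P(x)` as the unit-ball average of
`-(1/C(2ℓ,ℓ)) ∑_{j=1}^{ℓ} (-1)^j C(2ℓ,ℓ-j) (p(j) + p(-j))`, where `p(s) = P(x + stz)` is a
polynomial of degree `< 2ℓ`. Up to the sign `(-1)^ℓ`, the sum
`C(2ℓ,ℓ) p(0) + ∑_{j=1}^{ℓ} (-1)^j C(2ℓ,ℓ-j) (p(j) + p(-j))` is the `2ℓ`-th forward difference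
of `p(· - ℓ)` at `0`, which vanishes. So the integrand is the constant `p(0) = P(x)`.
-/

open MeasureTheory Metric Finset

/-- The ball average `B_t f(x) = (1/|B(x,t)|) ∫_{B(x,t)} f`. -/
noncomputable def ballAvgR {n : ℕ} (f : EuclideanSpace ℝ (Fin n) → ℝ) (t : ℝ)
    (x : EuclideanSpace ℝ (Fin n)) : ℝ :=
  ⨍ y in ball x t, f y

/-- The `2ℓ`-th order ball average operator
`B_{ℓ,t} f(x) := -(2/C(2ℓ,ℓ)) ∑_{j=1}^{ℓ} (-1)^j C(2ℓ, ℓ-j) B_{jt} f(x)`. -/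
noncomputable def ballAvgLR {n : ℕ} (ℓ : ℕ) (f : EuclideanSpace ℝ (Fin n) → ℝ) (t : ℝ)
    (x : EuclideanSpace ℝ (Fin n)) : ℝ :=
  -(2 / ((2 * ℓ).choose ℓ : ℝ)) *
    ∑ j ∈ Finset.Icc 1 ℓ, (-1 : ℝ) ^ j * ((2 * ℓ).choose (ℓ - j) : ℝ) *
      ballAvgR f ((j : ℝ) * t) x

open Polynomial

theorem sum_range_two_mul_add_one_eq_add_sum_Icc {M : Type*} [AddCommMonoid M] (a : ℕ → M)
    (ℓ : ℕ) :
    ∑ k ∈ range (2 * ℓ + 1), a k = a ℓ + ∑ j ∈ Icc 1 ℓ, (a (ℓ - j) + a (ℓ + j)) := by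
  have hlow : ∑ k ∈ range ℓ, a k = ∑ k ∈ range ℓ, a (ℓ - (1 + k)) := by
    rw [← sum_range_reflect]
    exact sum_congr rfl fun k _ => by rw [Nat.sub_sub]
  rw [two_mul, add_assoc, sum_range_add, sum_range_succ', hlow, ← Ico_add_one_right_eq_Icc,
    sum_Ico_eq_sum_range, Nat.add_sub_cancel, sum_add_distrib, add_zero]
  simp only [add_comm 1]
  abel

theorem Polynomial.sum_Icc_choose_mul_eval_add_eval_neg {R : Type*} [CommRing R] {ℓ : ℕ}
    {p : R[X]} (hp : p.natDegree < 2 * ℓ) :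
    ∑ j ∈ Icc 1 ℓ, (-1) ^ j * ((2 * ℓ).choose (ℓ - j) : R) * (p.eval (j : R) + p.eval (-j : R))
      = -((2 * ℓ).choose ℓ : R) * p.eval 0 := by
  set q := p.comp (X - C (ℓ : R))
  have hq : q.natDegree < 2 * ℓ :=
    (natDegree_comp_le.trans <|
      mul_le_of_le_one_right (Nat.zero_le _) (natDegree_X_sub_C_le _)).trans_lt hp
  have h := congrFun (fwdDiff_iter_eq_zero_of_degree_lt hq) 0
  rw [fwdDiff_iter_eq_sum_shift, sum_range_two_mul_add_one_eq_add_sum_Icc] at h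
  have hpair : ∀ j ∈ Icc 1 ℓ,
      ((-1 : ℤ) ^ (2 * ℓ - (ℓ - j)) * (2 * ℓ).choose (ℓ - j)) • q.eval (0 + (ℓ - j : ℕ) • 1)
        + ((-1 : ℤ) ^ (2 * ℓ - (ℓ + j)) * (2 * ℓ).choose (ℓ + j)) • q.eval (0 + (ℓ + j : ℕ) • 1)
      = (-1) ^ ℓ *
          ((-1) ^ j * ((2 * ℓ).choose (ℓ - j) : R) * (p.eval (j : R) + p.eval (-j : R))) := by
    intro j hj
    obtain ⟨m, rfl⟩ := Nat.exists_eq_add_of_le (mem_Icc.mp hj).2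
    rw [Nat.add_sub_cancel_left, show 2 * (j + m) - m = m + 2 * j by omega,
      show 2 * (j + m) - (j + m + j) = m by omega,
      Nat.choose_symm_of_eq_add (show 2 * (j + m) = j + m + j + m by ring)]
    simp only [q, eval_comp, eval_sub, eval_X, eval_C, zero_add, nsmul_eq_mul, mul_one,
      zsmul_eq_mul]
    push_cast
    ring_nf
    simp only [pow_mul', neg_one_sq, one_pow, mul_one]
  have hcentre : ((-1 : ℤ) ^ (2 * ℓ - ℓ) * (2 * ℓ).choose ℓ) • q.eval (0 + ℓ • 1)
      = (-1) ^ ℓ * (((2 * ℓ).choose ℓ : R) * p.eval 0) := by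
    simp [q, two_mul, mul_assoc]
  rw [sum_congr rfl hpair, hcentre, ← mul_sum, ← mul_add, Pi.zero_apply,
    (isUnit_neg_one.pow ℓ).mul_right_eq_zero] at h
  linear_combination h

theorem MvPolynomial.natDegree_aeval_le_totalDegree {σ R : Type*} [CommSemiring R]
    {g : σ → R[X]} (hg : ∀ i, (g i).natDegree ≤ 1) (P : MvPolynomial σ R) :
    (aeval g P).natDegree ≤ P.totalDegree := by
  conv_lhs => rw [← P.support_sum_monomial_coeff]
  rw [map_sum]
  refine natDegree_sum_le_of_forall_le _ _ fun m hm => ?_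
  rw [aeval_monomial, Polynomial.algebraMap_eq]
  refine (natDegree_C_mul_le _ _).trans <| (natDegree_prod_le _ _).trans <|
    le_trans ?_ (le_totalDegree hm)
  exact sum_le_sum fun i _ => natDegree_pow_le_of_le _ (hg i) |>.trans (mul_one _).le

theorem MvPolynomial.polynomial_eval_aeval_C_mul_X_add_C {σ R : Type*} [CommRing R]
    (P : MvPolynomial σ R) (x v : σ → R) (s : R) :
    (aeval (fun i => Polynomial.C (v i) * Polynomial.X + Polynomial.C (x i)) P).eval s
      = eval (x + s • v) P := by
  have hline :
      (fun i => Polynomial.aeval s (Polynomial.C (v i) * Polynomial.X + Polynomial.C (x i)))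
        = x + s • v := by
    ext i
    simp only [map_add, map_mul, Polynomial.aeval_C, Polynomial.aeval_X, Pi.add_apply,
      Pi.smul_apply, smul_eq_mul, Algebra.algebraMap_self, RingHom.id_apply]
    ring
  rw [← Polynomial.coe_aeval_eq_eval, comp_aeval_apply, hline]
  rfl

theorem MvPolynomial.sum_Icc_choose_mul_eval_add_eval_sub {σ R : Type*} [CommRing R] {ℓ : ℕ}
    {P : MvPolynomial σ R} (hP : P.totalDegree < 2 * ℓ) (x v : σ → R) :
    ∑ j ∈ Icc 1 ℓ, (-1) ^ j * ((2 * ℓ).choose (ℓ - j) : R) *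
        (eval (x + (j : R) • v) P + eval (x - (j : R) • v) P)
      = -((2 * ℓ).choose ℓ : R) * eval x P := by
  set p := aeval (fun i => Polynomial.C (v i) * Polynomial.X + Polynomial.C (x i)) P
  have hp : p.natDegree < 2 * ℓ :=
    (natDegree_aeval_le_totalDegree (fun _ => natDegree_linear_le) P).trans_lt hP
  simpa [p, polynomial_eval_aeval_C_mul_X_add_C, sub_eq_add_neg] using
    Polynomial.sum_Icc_choose_mul_eval_add_eval_neg hp

theorem setIntegral_ball_comp_add_left {E F : Type*} [SeminormedAddCommGroup E]
    [MeasurableSpace E] [BorelSpace E] [NormedAddCommGroup F] [NormedSpace ℝ F]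
    (μ : Measure E) [μ.IsAddLeftInvariant] (f : E → F) (x : E) (r : ℝ) :
    ∫ y in ball 0 r, f (x + y) ∂μ = ∫ y in ball x r, f y ∂μ := by
  have h := (measurePreserving_add_left μ x).setIntegral_preimage_emb
    (measurableEmbedding_addLeft x) f (ball x r)
  rwa [preimage_add_ball, sub_self] at h

theorem setAverage_ball_eq_setAverage_unitBall {E F : Type*} [NormedAddCommGroup E]
    [NormedSpace ℝ E] [MeasurableSpace E] [BorelSpace E] [FiniteDimensional ℝ E]
    [NormedAddCommGroup F] [NormedSpace ℝ F] (μ : Measure E) [μ.IsAddHaarMeasure]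
    (f : E → F) (x : E) {s : ℝ} (hs : s ≠ 0) :
    ⨍ y in ball x |s|, f y ∂μ = ⨍ z in ball 0 1, f (x + s • z) ∂μ := by
  have hvol : μ.real (ball x |s|) = |s| ^ Module.finrank ℝ E * μ.real (ball 0 1) := by
    rw [measureReal_def, Measure.addHaar_ball_of_pos μ x (abs_pos.mpr hs), ENNReal.toReal_mul,
      ENNReal.toReal_ofReal (by positivity), measureReal_def]
  rw [setAverage_eq, setAverage_eq, Measure.setIntegral_comp_smul μ (fun y => f (x + y)) _ hs,
    smul_unitBall hs, Real.norm_eq_abs, setIntegral_ball_comp_add_left, hvol, smul_smul, abs_inv,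
    abs_pow, mul_inv, mul_comm]

theorem Continuous.integrableOn_ball {E F : Type*} [MetricSpace E] [ProperSpace E]
    [MeasurableSpace E] [OpensMeasurableSpace E] [NormedAddCommGroup F] {μ : Measure E}
    [IsFiniteMeasureOnCompacts μ] {f : E → F} (hf : Continuous f) (x : E) (r : ℝ) :
    IntegrableOn f (ball x r) μ :=
  (hf.continuousOn.integrableOn_compact (isCompact_closedBall x r)).mono_set ball_subset_closedBall

theorem two_mul_ballAvgR_eq_setAverage {n : ℕ} {f : EuclideanSpace ℝ (Fin n) → ℝ}
    (hf : Continuous f) {s : ℝ} (hs : 0 < s) (x : EuclideanSpace ℝ (Fin n)) :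
    2 * ballAvgR f s x = ⨍ z in ball 0 1, (f (x + s • z) + f (x - s • z)) := by
  have hpos := setAverage_ball_eq_setAverage_unitBall volume f x hs.ne'
  have hneg := setAverage_ball_eq_setAverage_unitBall volume f x (neg_ne_zero.mpr hs.ne')
  rw [abs_of_pos hs] at hpos
  rw [abs_neg, abs_of_pos hs] at hneg
  simp only [neg_smul, ← sub_eq_add_neg] at hneg
  rw [setAverage_eq, integral_add (Continuous.integrableOn_ball (by fun_prop) _ _)
    (Continuous.integrableOn_ball (by fun_prop) _ _), smul_add, ← setAverage_eq,
    ← setAverage_eq, ← hpos, ← hneg, ballAvgR, two_mul]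

theorem ballAvgLR_eq_setAverage {n : ℕ} (ℓ : ℕ) {f : EuclideanSpace ℝ (Fin n) → ℝ}
    (hf : Continuous f) {t : ℝ} (ht : 0 < t) (x : EuclideanSpace ℝ (Fin n)) :
    ballAvgLR ℓ f t x = ⨍ z in ball 0 1, -(1 / ((2 * ℓ).choose ℓ : ℝ)) *
      ∑ j ∈ Icc 1 ℓ, (-1 : ℝ) ^ j * ((2 * ℓ).choose (ℓ - j) : ℝ) *
        (f (x + ((j : ℝ) * t) • z) + f (x - ((j : ℝ) * t) • z)) := by
  have hsym : ∀ j ∈ Icc 1 ℓ, ballAvgR f ((j : ℝ) * t) x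
      = (⨍ z in ball 0 1, (f (x + ((j : ℝ) * t) • z) + f (x - ((j : ℝ) * t) • z))) / 2 := by
    intro j hj
    have hj : (0 : ℝ) < j := by exact_mod_cast (mem_Icc.mp hj).1
    rw [← two_mul_ballAvgR_eq_setAverage hf (mul_pos hj ht) x]
    ring
  rw [ballAvgLR, sum_congr rfl fun j hj => by rw [hsym j hj], setAverage_eq, integral_const_mul,
    integral_finsetSum _ fun j _ => ?integrable]
  case integrable => exact Continuous.integrableOn_ball (by fun_prop) _ _
  simp only [integral_const_mul, setAverage_eq, smul_eq_mul, mul_sum]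
  exact sum_congr rfl fun j _ => by ring

theorem stmt11_general (n : ℕ) (ℓ : ℕ)
    (P : MvPolynomial (Fin n) ℝ) (hP : P.totalDegree < 2 * ℓ)
    (t : ℝ) (ht : 0 < t) (x : EuclideanSpace ℝ (Fin n)) :
    ballAvgLR ℓ (fun y => MvPolynomial.eval (fun i => y i) P) t x =
      MvPolynomial.eval (fun i => x i) P := by
  have hcont : Continuous fun y : EuclideanSpace ℝ (Fin n) => MvPolynomial.eval (fun i => y i) P :=
    MvPolynomial.continuous_eval P |>.comp (PiLp.continuous_ofLp 2 _)
  have hconst : ∀ z : EuclideanSpace ℝ (Fin n), -(1 / ((2 * ℓ).choose ℓ : ℝ)) *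
      ∑ j ∈ Icc 1 ℓ, (-1 : ℝ) ^ j * ((2 * ℓ).choose (ℓ - j) : ℝ) *
        (MvPolynomial.eval (fun i => (x + ((j : ℝ) * t) • z) i) P
          + MvPolynomial.eval (fun i => (x - ((j : ℝ) * t) • z) i) P)
      = MvPolynomial.eval (fun i => x i) P := by
    intro z
    have hadd : ∀ s : ℝ, (fun i => (x + (s * t) • z) i) = (fun i => x i) + s • fun i => t * z i :=
      fun s => by ext i; simp [mul_assoc]
    have hsub : ∀ s : ℝ, (fun i => (x - (s * t) • z) i) = (fun i => x i) - s • fun i => t * z i :=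
      fun s => by ext i; simp [mul_assoc]
    have hC : ((2 * ℓ).choose ℓ : ℝ) ≠ 0 := by exact_mod_cast (Nat.choose_pos (by omega)).ne'
    simp_rw [hadd, hsub,
      P.sum_Icc_choose_mul_eval_add_eval_sub hP (fun i => x i) (fun i => t * z i)]
    field_simp
  rw [ballAvgLR_eq_setAverage ℓ hcont ht x]
  simp_rw [hconst]
  exact setAverage_const (measure_ball_pos _ _ one_pos).ne' measure_ball_lt_top.ne _

/-- Let `ℓ ≥ 1`.  For every polynomial `P` on `ℝⁿ` of total degree strictly less than `2ℓ`,
every `t > 0` and every `x ∈ ℝⁿ`, `B_{ℓ,t} P(x) = P(x)`. -/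
theorem stmt11 (n : ℕ) (hn : 1 ≤ n) (ℓ : ℕ) (hℓ : 0 < ℓ)
    (P : MvPolynomial (Fin n) ℝ) (hP : P.totalDegree < 2 * ℓ)
    (t : ℝ) (ht : 0 < t) (x : EuclideanSpace ℝ (Fin n)) :
    ballAvgLR ℓ (fun y => MvPolynomial.eval (fun i => y i) P) t x =
      MvPolynomial.eval (fun i => x i) P :=
  stmt11_general n ℓ P hP t ht x
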